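/- arXiv:2310.03683 — 5 statements merged into one kernel-verified Lean document; each statement's English description precedes it below -/
import Mathlib

section
/- Triviality of the kernel of the linearized heteroclinic operator with Dirichlet condition at 0 and decay at infinity: if f : [0,∞) → ℝ is twice continuously differentiable, satisfies f''(z) = (3ℍ(z)² − 1) f(z) for all z ≥ 0, f(0) = 0, and f(z) → 0 as z → +∞, then f is identically zero on [0,∞). -/
/-!
`ℍ'` is a positive solution of `φ'' = (3ℍ² - 1) φ` which, together with `ℍ''`, stays bounded.
For any other solution `f`, the Wronskian `f φ' - f' φ` is constant. If `f → 0`, the mean value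
theorem gives points `cₙ → ∞` with `f'(cₙ) → 0`, so the Wronskian tends to `0` along `cₙ` and hence
vanishes identically. Then `(f / φ)' = 0`, so `f / φ` is constant, equal to `f(0) / φ(0) = 0`.
-/

open Filter

/-- The heteroclinic `ℍ(z) = tanh(z / √2)`. -/
noncomputable def Het : ℝ → ℝ := fun z => Real.tanh (z / Real.sqrt 2)

open Set Topology

section LinearODE

variable {q u u' v v' : ℝ → ℝ} {s : Set ℝ} {x y : ℝ}

noncomputable def wronskian (u u' v v' : ℝ → ℝ) (x : ℝ) : ℝ := u x * v' x - u' x * v x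

theorem hasDerivWithinAt_wronskian (hu : HasDerivWithinAt u (u' x) s x)
    (hu' : HasDerivWithinAt u' (q x * u x) s x) (hv : HasDerivWithinAt v (v' x) s x)
    (hv' : HasDerivWithinAt v' (q x * v x) s x) :
    HasDerivWithinAt (wronskian u u' v v') 0 s x :=
  ((hu.mul hv').sub (hu'.mul hv)).congr_deriv (by ring)

theorem Convex.wronskian_eq (hs : Convex ℝ s) (hu : ∀ x ∈ s, HasDerivWithinAt u (u' x) s x)
    (hu' : ∀ x ∈ s, HasDerivWithinAt u' (q x * u x) s x)
    (hv : ∀ x ∈ s, HasDerivWithinAt v (v' x) s x)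
    (hv' : ∀ x ∈ s, HasDerivWithinAt v' (q x * v x) s x) (hx : x ∈ s) (hy : y ∈ s) :
    wronskian u u' v v' y = wronskian u u' v v' x := by
  have := hs.norm_image_sub_le_of_norm_hasDerivWithin_le
    (fun z hz => hasDerivWithinAt_wronskian (hu z hz) (hu' z hz) (hv z hz) (hv' z hz))
    (fun _ _ => norm_zero.le) hx hy
  rwa [zero_mul, norm_le_zero_iff, sub_eq_zero] at this

theorem Convex.div_eq_of_wronskian_eq_zero (hs : Convex ℝ s)
    (hu : ∀ x ∈ s, HasDerivWithinAt u (u' x) s x) (hv : ∀ x ∈ s, HasDerivWithinAt v (v' x) s x)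
    (hv0 : ∀ x ∈ s, v x ≠ 0) (hW : ∀ x ∈ s, wronskian u u' v v' x = 0) (hx : x ∈ s)
    (hy : y ∈ s) : u y / v y = u x / v x := by
  have hderiv : ∀ z ∈ s, HasDerivWithinAt (fun z => u z / v z) 0 s z := fun z hz =>
    ((hu z hz).div (hv z hz) (hv0 z hz)).congr_deriv <| by
      rw [show u' z * v z - u z * v' z = -wronskian u u' v v' z by rw [wronskian]; ring,
        hW z hz, neg_zero, zero_div]
  have := hs.norm_image_sub_le_of_norm_hasDerivWithin_le hderiv (fun _ _ => norm_zero.le) hx hy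
  rwa [zero_mul, norm_le_zero_iff, sub_eq_zero] at this

theorem exists_seq_tendsto_deriv_zero_of_tendsto {f f' : ℝ → ℝ} {L : ℝ}
    (hf : ∀ᶠ x in atTop, HasDerivAt f (f' x) x) (hlim : Tendsto f atTop (𝓝 L)) :
    ∃ c : ℕ → ℝ, Tendsto c atTop atTop ∧ Tendsto (f' ∘ c) atTop (𝓝 0) := by
  obtain ⟨a, ha⟩ := eventually_atTop.1 hf
  have hmvt (n : ℕ) : ∃ c ∈ Ioo (a + n) (a + n + 1), f' c = f (a + n + 1) - f (a + n) := by
    simpa using exists_hasDerivAt_eq_slope f f' (lt_add_one (a + n))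
      (fun z hz => (ha z (le_trans (by simp) hz.1)).continuousAt.continuousWithinAt)
      (fun z hz => ha z (le_trans (by simp) hz.1.le))
  choose c hc hslope using hmvt
  have hshift : Tendsto (fun n : ℕ => a + n) atTop atTop :=
    tendsto_atTop_add_const_left _ a tendsto_natCast_atTop_atTop
  refine ⟨c, tendsto_atTop_mono (fun n => (hc n).1.le) hshift, ?_⟩
  have hdiff := (hlim.comp (tendsto_atTop_add_const_right _ 1 hshift)).sub (hlim.comp hshift)
  rw [sub_self] at hdiff
  exact hdiff.congr fun n => by simp [hslope n]

theorem eqOn_zero_of_tendsto_atTop_zero {a : ℝ} (hu : ∀ x ∈ Ici a, HasDerivWithinAt u (u' x) (Ici a) x)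
    (hu' : ∀ x ∈ Ici a, HasDerivWithinAt u' (q x * u x) (Ici a) x)
    (hv : ∀ x ∈ Ici a, HasDerivWithinAt v (v' x) (Ici a) x)
    (hv' : ∀ x ∈ Ici a, HasDerivWithinAt v' (q x * v x) (Ici a) x)
    (hv0 : ∀ x ∈ Ici a, v x ≠ 0) (hv_bdd : IsBoundedUnder (· ≤ ·) atTop (norm ∘ v))
    (hv'_bdd : IsBoundedUnder (· ≤ ·) atTop (norm ∘ v')) (ha : u a = 0)
    (hlim : Tendsto u atTop (𝓝 0)) : EqOn u 0 (Ici a) := by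
  set W := wronskian u u' v v'
  have hW_const : ∀ x ∈ Ici a, W x = W a := fun x hx =>
    (convex_Ici a).wronskian_eq hu hu' hv hv' self_mem_Ici hx
  obtain ⟨c, hc, hu'c⟩ := exists_seq_tendsto_deriv_zero_of_tendsto
    (eventually_gt_atTop a |>.mono fun x hx => (hu x hx.le).hasDerivAt (Ici_mem_nhds hx)) hlim
  have hWc : Tendsto (W ∘ c) atTop (𝓝 0) := by
    have h := ((hlim.comp hc).zero_mul_isBoundedUnder_le
      (hc.isBoundedUnder_comp (f := norm ∘ v') hv'_bdd)).sub
      (hu'c.zero_mul_isBoundedUnder_le (hc.isBoundedUnder_comp (f := norm ∘ v) hv_bdd))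
    rwa [sub_zero] at h
  have hWa : W a = 0 := tendsto_nhds_unique
    (tendsto_const_nhds.congr' <| (hc.eventually (eventually_ge_atTop a)).mono
      fun n hn => (hW_const (c n) hn).symm) hWc
  intro x hx
  have := (convex_Ici a).div_eq_of_wronskian_eq_zero hu hv hv0
    (fun z hz => (hW_const z hz).trans hWa) self_mem_Ici hx
  rwa [ha, zero_div, div_eq_zero_iff, or_iff_left (hv0 x hx)] at this

end LinearODE

theorem Real.hasDerivAt_tanh (x : ℝ) : HasDerivAt Real.tanh (1 - Real.tanh x ^ 2) x := by
  rw [show Real.tanh = fun y => Real.sinh y / Real.cosh y from funext Real.tanh_eq_sinh_div_cosh]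
  have hc := (Real.cosh_pos x).ne'
  refine ((Real.hasDerivAt_sinh x).div (Real.hasDerivAt_cosh x) hc).congr_deriv ?_
  field_simp

noncomputable def Het' (z : ℝ) : ℝ := (1 - Het z ^ 2) / Real.sqrt 2

noncomputable def Het'' (z : ℝ) : ℝ := -Het z * (1 - Het z ^ 2)

theorem Het_sq_lt_one (z : ℝ) : Het z ^ 2 < 1 := Real.tanh_sq_lt_one _

theorem hasDerivAt_Het (z : ℝ) : HasDerivAt Het (Het' z) z := by
  have h := (Real.hasDerivAt_tanh (z / Real.sqrt 2)).comp z ((hasDerivAt_id z).div_const _)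
  exact h.congr_deriv (by simp only [Het', Het]; ring)

theorem hasDerivAt_Het' (z : ℝ) : HasDerivAt Het' (Het'' z) z := by
  have h2 : Real.sqrt 2 ^ 2 = 2 := Real.sq_sqrt zero_le_two
  refine (((hasDerivAt_Het z).pow 2).const_sub 1 |>.div_const _).congr_deriv ?_
  simp only [Het', Het'']
  field_simp
  linear_combination (Het z - Het z ^ 3) * h2

theorem hasDerivAt_Het'' (z : ℝ) : HasDerivAt Het'' ((3 * Het z ^ 2 - 1) * Het' z) z := by
  refine ((hasDerivAt_Het z).neg.mul (((hasDerivAt_Het z).pow 2).const_sub 1)).congr_deriv ?_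
  simp only [Het', Pi.neg_apply, Pi.pow_apply]
  ring

theorem Het'_pos (z : ℝ) : 0 < Het' z :=
  div_pos (sub_pos.2 (Het_sq_lt_one z)) (Real.sqrt_pos.2 zero_lt_two)

theorem abs_Het'_le_one (z : ℝ) : |Het' z| ≤ 1 := by
  rw [abs_of_pos (Het'_pos z), Het', div_le_one (Real.sqrt_pos.2 zero_lt_two)]
  nlinarith [sq_nonneg (Het z), Real.one_lt_sqrt_two]

theorem abs_Het''_le_one (z : ℝ) : |Het'' z| ≤ 1 := by
  have h := Het_sq_lt_one z
  rw [Het'', abs_le]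
  constructor <;> nlinarith [sq_nonneg (Het z), sq_nonneg (Het z - 1), sq_nonneg (Het z + 1)]

/-- Triviality of the kernel of the linearized heteroclinic operator with Dirichlet
condition at `0` and decay at infinity: if `f` is twice continuously differentiable on
`[0, ∞)`, satisfies `f'' = (3ℍ² - 1) f` there, `f(0) = 0`, and `f → 0` at `+∞`, then
`f ≡ 0` on `[0, ∞)`. -/
theorem linearized_kernel_trivial (f : ℝ → ℝ)
    (hf : ContDiffOn ℝ 2 f (Set.Ici 0))
    (hode : ∀ z ∈ Set.Ici (0 : ℝ),
      derivWithin (derivWithin f (Set.Ici 0)) (Set.Ici 0) z = (3 * Het z ^ 2 - 1) * f z)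
    (h0 : f 0 = 0)
    (hlim : Tendsto f atTop (nhds 0)) :
    ∀ z ∈ Set.Ici (0 : ℝ), f z = 0 := by
  have hf' : ContDiffOn ℝ 1 (derivWithin f (Ici 0)) (Ici 0) :=
    hf.derivWithin (uniqueDiffOn_Ici 0) (by norm_num)
  refine eqOn_zero_of_tendsto_atTop_zero (q := fun z => 3 * Het z ^ 2 - 1) (v := Het') (v' := Het'')
    (fun z hz => (hf.differentiableOn two_ne_zero z hz).hasDerivWithinAt)
    (fun z hz => hode z hz ▸ (hf'.differentiableOn one_ne_zero z hz).hasDerivWithinAt)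
    (fun z _ => (hasDerivAt_Het' z).hasDerivWithinAt)
    (fun z _ => (hasDerivAt_Het'' z).hasDerivWithinAt)
    (fun z _ => (Het'_pos z).ne') ?_ ?_ h0 hlim
  · exact isBoundedUnder_of ⟨1, fun z => abs_Het'_le_one z⟩
  · exact isBoundedUnder_of ⟨1, fun z => abs_Het''_le_one z⟩
end

section
/- Descent estimate along a truncated pseudogradient flow: let E be a Banach space, Φ : E → ℝ continuously Fréchet differentiable, V : E → E, μ ∈ (0, 1], δ > 0, and define h : [0, ∞) → ℝ by h(s) = 1 for s ≤ 1 and h(s) = 1/s for s ≥ 1. Suppose w : [0, δ] → E is differentiable with w'(t) = −h(‖Φ'(w(t))‖) V(w(t)) for all t ∈ [0, δ], and that for every t ∈ [0, δ] the pseudogradient inequalities ‖V(w(t))‖ ≤ 2‖Φ'(w(t))‖ and Φ'(w(t))(V(w(t))) ≥ ‖Φ'(w(t))‖² hold, together with the gradient lower bound ‖Φ'(w(t))‖ ≥ μ. Then Φ(w(δ)) ≤ Φ(w(0)) − δ μ². -/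
/-! The truncation factor `h` is chosen so that, as long as `‖Φ'‖ ≥ μ` with `μ ≤ 1`, the flow
decreases `Φ` at rate at least `μ²`: for `‖Φ'‖ ≤ 1` the rate is `Φ'(V) ≥ ‖Φ'‖² ≥ μ²`, and for
`‖Φ'‖ ≥ 1` it is `Φ'(V) / ‖Φ'‖ ≥ ‖Φ'‖ ≥ 1 ≥ μ²`. The mean value inequality integrates this
pointwise rate over `[0, δ]`. -/

open Set

theorem sq_le_truncation_mul {h : ℝ → ℝ}
    (hh1 : ∀ s : ℝ, 0 ≤ s → s ≤ 1 → h s = 1) (hh2 : ∀ s : ℝ, 1 ≤ s → h s = 1 / s)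
    {μ s a : ℝ} (hμ0 : 0 ≤ μ) (hμ1 : μ ≤ 1) (hμs : μ ≤ s) (hsa : s ^ 2 ≤ a) :
    μ ^ 2 ≤ h s * a := by
  rcases le_total s 1 with hs1 | hs1
  · rw [hh1 s (hμ0.trans hμs) hs1, one_mul]
    nlinarith
  · have hs0 : 0 < s := one_pos.trans_le hs1
    have hμsq : μ ^ 2 ≤ 1 := pow_le_one₀ hμ0 hμ1
    rw [hh2 s hs1, one_div_mul_eq_div, le_div_iff₀ hs0]
    nlinarith

theorem apply_neg_truncation_smul_le {E : Type*} [NormedAddCommGroup E] [NormedSpace ℝ E]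
    {h : ℝ → ℝ} (hh1 : ∀ s : ℝ, 0 ≤ s → s ≤ 1 → h s = 1)
    (hh2 : ∀ s : ℝ, 1 ≤ s → h s = 1 / s) {μ : ℝ} (hμ0 : 0 ≤ μ) (hμ1 : μ ≤ 1)
    {F : E →L[ℝ] ℝ} {v : E} (hμF : μ ≤ ‖F‖) (hFv : ‖F‖ ^ 2 ≤ F v) :
    F (-(h ‖F‖) • v) ≤ -μ ^ 2 := by
  rw [map_smul, smul_eq_mul, neg_mul, neg_le_neg_iff]
  exact sq_le_truncation_mul hh1 hh2 hμ0 hμ1 hμF hFv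

theorem image_sub_le_mul_sub_of_hasDerivAt_le {f f' : ℝ → ℝ} {a b C : ℝ} (hab : a ≤ b)
    (hf : ∀ t ∈ Icc a b, HasDerivAt f (f' t) t) (hf' : ∀ t ∈ Icc a b, f' t ≤ C) :
    f b - f a ≤ C * (b - a) := by
  have hint : ∀ t ∈ interior (Icc a b), t ∈ Icc a b := fun t ht => interior_subset ht
  refine (convex_Icc a b).image_sub_le_mul_sub_of_deriv_le
    (fun t ht => (hf t ht).continuousAt.continuousWithinAt)
    (fun t ht => (hf t (hint t ht)).differentiableAt.differentiableWithinAt)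
    (fun t ht => ?_) a (left_mem_Icc.2 hab) b (right_mem_Icc.2 hab) hab
  rw [(hf t (hint t ht)).deriv]
  exact hf' t (hint t ht)

theorem descent_along_pseudogradient_flow_general {E : Type*} [NormedAddCommGroup E]
    [NormedSpace ℝ E]
    (Φ : E → ℝ) (hΦ : ContDiff ℝ 1 Φ) (V : E → E) (μ δ : ℝ)
    (hμ0 : 0 < μ) (hμ1 : μ ≤ 1) (hδ : 0 < δ)
    (h : ℝ → ℝ)
    (hh1 : ∀ s : ℝ, 0 ≤ s → s ≤ 1 → h s = 1)
    (hh2 : ∀ s : ℝ, 1 ≤ s → h s = 1 / s)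
    (w : ℝ → E)
    (hflow : ∀ t ∈ Set.Icc (0 : ℝ) δ,
      HasDerivAt w (-(h ‖fderiv ℝ Φ (w t)‖) • V (w t)) t)
    (hV2 : ∀ t ∈ Set.Icc (0 : ℝ) δ, ‖fderiv ℝ Φ (w t)‖ ^ 2 ≤ fderiv ℝ Φ (w t) (V (w t)))
    (hgrad : ∀ t ∈ Set.Icc (0 : ℝ) δ, μ ≤ ‖fderiv ℝ Φ (w t)‖) :
    Φ (w δ) ≤ Φ (w 0) - δ * μ ^ 2 := by
  have hderiv : ∀ t ∈ Icc 0 δ, HasDerivAt (Φ ∘ w)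
      (fderiv ℝ Φ (w t) (-(h ‖fderiv ℝ Φ (w t)‖) • V (w t))) t := fun t ht =>
    ((hΦ.differentiable one_ne_zero _).hasFDerivAt).comp_hasDerivAt t (hflow t ht)
  have hdescent := image_sub_le_mul_sub_of_hasDerivAt_le hδ.le hderiv fun t ht =>
    apply_neg_truncation_smul_le hh1 hh2 hμ0.le hμ1 (hgrad t ht) (hV2 t ht)
  simp only [Function.comp_apply, sub_zero] at hdescent
  linarith

/-- Descent estimate along a truncated pseudogradient flow: if `w` solves
`w' = -h(‖Φ'(w)‖) • V(w)` on `[0, δ]`, where `V` satisfies the pseudogradient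
inequalities along the flow and `‖Φ'(w(t))‖ ≥ μ`, then `Φ(w(δ)) ≤ Φ(w(0)) - δμ²`. -/
theorem descent_along_pseudogradient_flow {E : Type*} [NormedAddCommGroup E]
    [NormedSpace ℝ E] [CompleteSpace E]
    (Φ : E → ℝ) (hΦ : ContDiff ℝ 1 Φ) (V : E → E) (μ δ : ℝ)
    (hμ0 : 0 < μ) (hμ1 : μ ≤ 1) (hδ : 0 < δ)
    (h : ℝ → ℝ)
    (hh1 : ∀ s : ℝ, 0 ≤ s → s ≤ 1 → h s = 1)
    (hh2 : ∀ s : ℝ, 1 ≤ s → h s = 1 / s)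
    (w : ℝ → E)
    (hflow : ∀ t ∈ Set.Icc (0 : ℝ) δ,
      HasDerivAt w (-(h ‖fderiv ℝ Φ (w t)‖) • V (w t)) t)
    (hV1 : ∀ t ∈ Set.Icc (0 : ℝ) δ, ‖V (w t)‖ ≤ 2 * ‖fderiv ℝ Φ (w t)‖)
    (hV2 : ∀ t ∈ Set.Icc (0 : ℝ) δ, ‖fderiv ℝ Φ (w t)‖ ^ 2 ≤ fderiv ℝ Φ (w t) (V (w t)))
    (hgrad : ∀ t ∈ Set.Icc (0 : ℝ) δ, μ ≤ ‖fderiv ℝ Φ (w t)‖) :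
    Φ (w δ) ≤ Φ (w 0) - δ * μ ^ 2 :=
  descent_along_pseudogradient_flow_general Φ hΦ V μ δ hμ0 hμ1 hδ h hh1 hh2 w hflow hV2 hgrad
end

section
/- Localized quantitative deformation lemma: let E be a Banach space, Φ : E → ℝ continuously Fréchet differentiable, c ∈ ℝ, δ > 0, μ ∈ (0, 1], and η, η̄ with 0 < η̄ < η and 8η̄ ≤ δμ². Let U ⊆ E be nonempty, let U_r := {v ∈ E : dist(v, U) ≤ r} for r > 0, and set N := {u ∈ U_{2δ} : c − η ≤ Φ(u) ≤ c + η}. Assume (i) ‖Φ'(u)‖ ≥ μ for every u ∈ N, and (ii) there exists a locally Lipschitz map V : E → E with ‖V(u)‖ ≤ 2‖Φ'(u)‖ and Φ'(u)(V(u)) ≥ ‖Φ'(u)‖² for every u ∈ N. Then there exists a continuous map F : [0,1] × E → E such that: (1) F(0, u) = u for every u ∈ E; (2) F(t, u) = u for every t ∈ [0,1] whenever u ∉ N; (3) for every u ∈ U with Φ(u) ≤ c + η̄ one has F(1, u) ∈ U_δ and Φ(F(1, u)) ≤ c − η̄; (4) for each t ∈ [0,1] the map F(t, ·) : E → E is a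 homeomorphism. -/
/-!
Cut off a normalized pseudogradient field: if `χ` is a locally Lipschitz function equal to `1`
on `A = {v | dist(v, U) ≤ δ, c - η̄ ≤ Φ v ≤ c + η̄}` and to `0` off `N`, then
`W = -χ / max(‖V‖, μ)² • V` is locally Lipschitz, bounded by `1 / μ`, vanishes off `N`, and
satisfies `Φ' W ≤ 0` everywhere and `Φ' W ≤ -1/4` on `A`. A bounded locally Lipschitz field on a
Banach space has a forward flow `φ` defined for all `t ≥ 0`, jointly continuous by Grönwall's
inequality, and each `φ t` is a homeomorphism whose inverse is the flow of `-W` at time `t`.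
Take `F t = φ (δ μ t)` for `t ≥ 0`. Up to time `δ μ` a trajectory moves by at most `δ`, so a
trajectory starting in `U ∩ {Φ ≤ c + η̄}` and staying above `c - η̄` would stay in `A` and lose
at least `δ μ / 4 ≥ 2 η̄` of energy, which is impossible.
-/

open Set Metric Filter Topology Real
open scoped NNReal

theorem Icc_mem_nhdsWithin_Ici_of_mem {a b c : ℝ} (h : b ∈ Ico a c) : Icc a c ∈ 𝓝[Ici a] b :=
  Ici_inter_Iic (a := a) (b := c) ▸ inter_mem_nhdsWithin _ (Iic_mem_nhds h.2)

theorem LipschitzOnWith.exists_tendsto_nhdsLT {β : Type*} [PseudoMetricSpace β] [CompleteSpace β]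
    {K : ℝ≥0} {f : ℝ → β} {a b : ℝ} (hf : LipschitzOnWith K f (Ico a b)) (hab : a < b) :
    ∃ y, Tendsto f (𝓝[<] b) (𝓝 y) := by
  refine CompleteSpace.complete (Metric.cauchy_iff.2 ⟨inferInstance, fun ε hε ↦ ?_⟩)
  have hε' : 0 < ε / (K + 1) := by positivity
  set a' := max a (b - ε / (K + 1))
  refine ⟨f '' Ioo a' b, mem_map.2 (mem_of_superset (Ioo_mem_nhdsLT (max_lt hab (by linarith)))
    (subset_preimage_image _ _)), ?_⟩
  rintro _ ⟨s, hs, rfl⟩ _ ⟨t, ht, rfl⟩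
  have hIoo : Ioo a' b ⊆ Ico a b := fun u hu ↦ ⟨(le_max_left _ _).trans hu.1.le, hu.2⟩
  have hst : dist s t < ε / (K + 1) := by
    rw [Real.dist_eq, abs_sub_lt_iff]
    constructor <;> linarith [hs.1, hs.2, ht.1, ht.2, le_max_right a (b - ε / (K + 1))]
  calc dist (f s) (f t) ≤ K * dist s t := hf.dist_le_mul s (hIoo hs) t (hIoo ht)
    _ ≤ (K + 1) * dist s t := by gcongr; linarith
    _ < (K + 1) * (ε / (K + 1)) := by gcongr
    _ = ε := by field_simp

theorem LocallyLipschitz.exists_lipschitzOnWith_thickening {α F : Type*} [PseudoMetricSpace α]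
    [SeminormedAddCommGroup F] {f : α → F} {M : ℝ} (hf : LocallyLipschitz f)
    (hfb : ∀ x, ‖f x‖ ≤ M) {K : Set α} (hK : IsCompact K) :
    ∃ r > 0, ∃ L, LipschitzOnWith L f (thickening r K) := by
  choose L s hs hL using hf
  obtain ⟨t, -, hKt⟩ := hK.elim_nhds_subcover (fun x ↦ interior (s x))
    fun x _ ↦ interior_mem_nhds.2 (hs x)
  obtain ⟨δ, hδ, hδs⟩ := lebesgue_number_lemma_of_metric hK
    (c := fun i : (t : Set α) ↦ interior (s i)) (fun _ ↦ isOpen_interior)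
    (by simpa only [iUnion_coe_set, Finset.mem_coe] using hKt)
  have hL₀ : 0 ≤ max ((t.sup L : ℝ≥0) : ℝ) (4 * M / δ) := le_max_of_le_left (NNReal.coe_nonneg _)
  refine ⟨δ / 2, half_pos hδ, _,
    LipschitzOnWith.of_dist_le' (K := max ((t.sup L : ℝ≥0) : ℝ) (4 * M / δ)) fun x hx y hy ↦ ?_⟩
  obtain ⟨z, hz, hxz⟩ := mem_thickening_iff.1 hx
  rcases lt_or_ge (dist x y) (δ / 2) with hxy | hxy
  · obtain ⟨i, hi⟩ := hδs z hz
    have hxs : x ∈ s i := interior_subset (hi (mem_ball.2 (by linarith)))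
    have hyz : dist y z < δ := by linarith [dist_triangle y x z, dist_comm x y]
    have hys : y ∈ s i := interior_subset (hi (mem_ball.2 hyz))
    calc dist (f x) (f y) ≤ L i * dist x y := (hL i).dist_le_mul x hxs y hys
      _ ≤ _ := by
        gcongr
        exact le_max_of_le_left (by exact_mod_cast Finset.le_sup (f := L) (Finset.mem_coe.1 i.2))
  · calc dist (f x) (f y) ≤ ‖f x‖ + ‖f y‖ := dist_le_norm_add_norm _ _
      _ ≤ 4 * M / δ * (δ / 2) := by field_simp; linarith [hfb x, hfb y]
      _ ≤ _ := mul_le_mul (le_max_right _ _) hxy (by positivity) hL₀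

section LocallyLipschitz

variable {α : Type*} [PseudoMetricSpace α]
  {F : Type*} [NormedAddCommGroup F] [NormedSpace ℝ F]
  {G : Type*} [NormedAddCommGroup G] [NormedSpace ℝ G]

theorem LocallyLipschitz.contDiffAt_comp {g : F → G} {f : α → F}
    (hg : ∀ x, ContDiffAt ℝ 1 g (f x)) (hf : LocallyLipschitz f) :
    LocallyLipschitz (g ∘ f) := by
  intro x
  obtain ⟨Kg, t, ht, hgt⟩ := (hg x).exists_lipschitzOnWith
  obtain ⟨Kf, s, hs, hfs⟩ := hf x
  exact ⟨Kg * Kf, s ∩ f ⁻¹' t, inter_mem hs (hf.continuous.continuousAt.preimage_mem_nhds ht),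
    hgt.comp (hfs.mono inter_subset_left) fun _ hy ↦ hy.2⟩

theorem exists_locallyLipschitz_cutoff {A B : Set α} (hA : IsClosed A) (hAB : A ⊆ interior B) :
    ∃ χ : α → ℝ, LocallyLipschitz χ ∧ (∀ x, χ x ∈ Icc 0 1) ∧ EqOn χ 1 A ∧ EqOn χ 0 Bᶜ := by
  rcases A.eq_empty_or_nonempty with rfl | hA₀
  · exact ⟨0, LocallyLipschitz.const 0, fun _ ↦ ⟨le_rfl, zero_le_one⟩, fun _ h ↦ h.elim,
      fun _ _ ↦ rfl⟩
  rcases (Bᶜ).eq_empty_or_nonempty with hB | hB₀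
  · exact ⟨1, LocallyLipschitz.const 1, fun _ ↦ ⟨zero_le_one, le_rfl⟩, fun _ _ ↦ rfl,
      fun _ h ↦ (hB ▸ h).elim⟩
  set a : α → ℝ := fun x ↦ infDist x A
  set b : α → ℝ := fun x ↦ infDist x Bᶜ
  have hpos : ∀ x, 0 < a x + b x := by
    intro x
    by_cases hx : x ∈ A
    · have : 0 < b x := (infDist_pos_iff_notMem_closure hB₀).1 fun h ↦
        (closure_compl (s := B) ▸ h) (hAB hx)
      exact add_pos_of_nonneg_of_pos infDist_nonneg this
    · exact add_pos_of_pos_of_nonneg ((hA.notMem_iff_infDist_pos hA₀).1 hx) infDist_nonneg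
  refine ⟨fun x ↦ b x / (a x + b x), ?_, fun x ↦ ?_, fun x hx ↦ ?_, fun x hx ↦ ?_⟩
  · have hab : LocallyLipschitz fun x ↦ (a x, b x) :=
      (lipschitz_infDist_pt A).locallyLipschitz.prodMk (lipschitz_infDist_pt _).locallyLipschitz
    exact hab.contDiffAt_comp (g := fun p : ℝ × ℝ ↦ p.2 / (p.1 + p.2))
      fun x ↦ contDiffAt_snd.div (contDiffAt_fst.add contDiffAt_snd) (hpos x).ne'
  · exact ⟨div_nonneg infDist_nonneg (hpos x).le,
      div_le_one_of_le₀ (le_add_of_nonneg_left infDist_nonneg) (hpos x).le⟩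
  · simp only [Pi.one_apply, a, infDist_zero_of_mem hx, zero_add]
    exact div_self (by simpa [a, infDist_zero_of_mem hx] using (hpos x).ne')
  · simp [b, infDist_zero_of_mem hx]

end LocallyLipschitz

section IntegralCurve

variable {E : Type*} [NormedAddCommGroup E] [NormedSpace ℝ E]
  {γ γ' : ℝ → E} {v : ℝ → E → E} {W : E → E} {s s' : Set ℝ} {a b c t : ℝ}

theorem IsIntegralCurveOn.hasDerivWithinAt_Ici (h : IsIntegralCurveOn γ v (Icc a b))
    (ht : t ∈ Ico a b) : HasDerivWithinAt γ (v t (γ t)) (Ici t) t :=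
  (h t (Ico_subset_Icc_self ht)).mono_of_mem_nhdsWithin
    (mem_of_superset (Icc_mem_nhdsGE ht.2) (Icc_subset_Icc_left ht.1))

theorem IsIntegralCurveOn.congr (h : IsIntegralCurveOn γ v s) (hγ : EqOn γ' γ s) :
    IsIntegralCurveOn γ' v s := fun t ht ↦ by
  rw [hγ ht]
  exact (h t ht).congr (fun _ hu ↦ hγ hu) (hγ ht)

theorem IsIntegralCurveOn.union_of_isClosed (h : IsIntegralCurveOn γ v s)
    (h' : IsIntegralCurveOn γ v s') (hs : IsClosed s) (hs' : IsClosed s') :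
    IsIntegralCurveOn γ v (s ∪ s') := fun t _ ↦ by
  have hderiv : ∀ {u : Set ℝ}, IsClosed u → IsIntegralCurveOn γ v u →
      HasDerivWithinAt γ (v t (γ t)) u t := fun {u} hu hγ ↦ by
    by_cases htu : t ∈ u
    · exact hγ t htu
    · exact hasDerivWithinAt_iff_hasFDerivWithinAt.2 (.of_notMem_closure (by rwa [hu.closure_eq]))
  exact (hderiv hs h).union (hderiv hs' h')

theorem IsIntegralCurveOn.concat_Icc (h : IsIntegralCurveOn γ v (Icc a b))
    (h' : IsIntegralCurveOn γ' v (Icc b c)) (hb : γ b = γ' b) (hab : a ≤ b) (hbc : b ≤ c) :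
    IsIntegralCurveOn (fun t ↦ if t ≤ b then γ t else γ' t) v (Icc a c) := by
  rw [← Icc_union_Icc_eq_Icc hab hbc]
  refine (h.congr fun t ht ↦ if_pos ht.2).union_of_isClosed (h'.congr fun t ht ↦ ?_)
    isClosed_Icc isClosed_Icc
  rcases ht.1.eq_or_lt with rfl | hlt
  · simp [hb]
  · simp [not_le.2 hlt]

theorem IsIntegralCurveOn.lipschitzOnWith {M : ℝ≥0} (h : IsIntegralCurveOn γ (fun _ ↦ W) s)
    (hs : Convex ℝ s) (hW : ∀ x, ‖W x‖ ≤ M) : LipschitzOnWith M γ s :=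
  hs.lipschitzOnWith_of_nnnorm_hasDerivWithin_le h fun t _ ↦ hW (γ t)

theorem IsIntegralCurveOn.dist_le_of_lipschitzOnWith {K : Set E} {L : ℝ≥0}
    (hW : LipschitzOnWith L W K) (hγ : IsIntegralCurveOn γ (fun _ ↦ W) (Icc a b))
    (hγ' : IsIntegralCurveOn γ' (fun _ ↦ W) (Icc a b)) (hγK : ∀ t ∈ Ico a b, γ t ∈ K)
    (hγ'K : ∀ t ∈ Ico a b, γ' t ∈ K) :
    ∀ t ∈ Icc a b, dist (γ t) (γ' t) ≤ dist (γ a) (γ' a) * exp (L * (t - a)) :=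
  dist_le_of_trajectories_ODE_of_mem (fun _ _ ↦ hW) hγ.continuousOn
    (fun _ ht ↦ hγ.hasDerivWithinAt_Ici ht) hγK hγ'.continuousOn
    (fun _ ht ↦ hγ'.hasDerivWithinAt_Ici ht) hγ'K le_rfl

theorem IsIntegralCurveOn.dist_le_of_lipschitzOnWith_thickening {r : ℝ} {L : ℝ≥0}
    (hW : LipschitzOnWith L W (thickening r (γ' '' Icc a b)))
    (hγ : IsIntegralCurveOn γ (fun _ ↦ W) (Icc a b))
    (hγ' : IsIntegralCurveOn γ' (fun _ ↦ W) (Icc a b))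
    (hr : dist (γ a) (γ' a) * exp (L * (b - a)) < r) :
    ∀ t ∈ Icc a b, dist (γ t) (γ' t) ≤ dist (γ a) (γ' a) * exp (L * (t - a)) := by
  set δ := dist (γ a) (γ' a)
  have hr₀ : 0 < r := (mul_nonneg dist_nonneg (exp_pos _).le).trans_lt hr
  have hδr : ∀ u ≤ b, δ * exp (L * (u - a)) < r := fun u hu ↦
    lt_of_le_of_lt (by gcongr) hr
  have hd : ContinuousOn (fun u ↦ dist (γ u) (γ' u)) (Icc a b) :=
    continuous_dist.comp_continuousOn (hγ.continuousOn.prodMk hγ'.continuousOn)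
  set S := {t | dist (γ t) (γ' t) ≤ δ * exp (L * (t - a))}
  have hS : IsClosed (S ∩ Icc a b) := by
    rw [inter_comm]
    exact isClosed_Icc.isClosed_le hd (by fun_prop)
  -- continuous induction: while the estimate holds, `γ` stays in the thickening, where
  -- Grönwall's inequality applies a little further
  refine hS.Icc_subset_of_forall_mem_nhdsGT_of_Icc_subset (by simp [S, δ]) fun t ht hS ↦ ?_
  have hev : ∀ᶠ u in 𝓝[>] t, u < b ∧ dist (γ u) (γ' u) < r := by
    rw [← nhdsWithin_Ioo_eq_nhdsGT ht.2]
    refine (eventually_mem_nhdsWithin.mono fun u hu ↦ hu.2).and ?_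
    exact ((hd t (Ico_subset_Icc_self ht)).mono fun u hu ↦ ⟨ht.1.trans hu.1.le, hu.2.le⟩)
      (gt_mem_nhds ((hS ⟨ht.1, le_rfl⟩).trans_lt (hδr t ht.2.le)))
  obtain ⟨t', htt', ht'⟩ := mem_nhdsGT_iff_exists_Ioo_subset.1 hev
  obtain ⟨t'', htt'', ht''⟩ := exists_between (show t < t' from htt')
  have ht''b : t'' ≤ b := (ht' ⟨htt'', ht''⟩).1.le
  have hγK : ∀ u ∈ Ico a t'', γ u ∈ thickening r (γ' '' Icc a b) := fun u hu ↦ by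
    refine mem_thickening_iff.2 ⟨γ' u, mem_image_of_mem _ ⟨hu.1, hu.2.le.trans ht''b⟩, ?_⟩
    rcases le_or_gt u t with hut | htu
    · exact (hS ⟨hu.1, hut⟩).trans_lt (hδr u (hut.trans ht.2.le))
    · exact (ht' ⟨htu, hu.2.trans ht''⟩).2
  have hγ'K : ∀ u ∈ Ico a t'', γ' u ∈ thickening r (γ' '' Icc a b) := fun u hu ↦
    mem_thickening_iff.2 ⟨γ' u, mem_image_of_mem _ ⟨hu.1, hu.2.le.trans ht''b⟩,
      by simpa using hr₀⟩
  refine mem_of_superset (Ioo_mem_nhdsGT htt'') fun u hu ↦ ?_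
  exact (hγ.mono (Icc_subset_Icc_right ht''b)).dist_le_of_lipschitzOnWith hW
    (hγ'.mono (Icc_subset_Icc_right ht''b)) hγK hγ'K u ⟨ht.1.trans hu.1.le, hu.2.le⟩

theorem IsIntegralCurveOn.eqOn_of_locallyLipschitz (hW : LocallyLipschitz W)
    (hγ : IsIntegralCurveOn γ (fun _ ↦ W) (Icc a b))
    (hγ' : IsIntegralCurveOn γ' (fun _ ↦ W) (Icc a b)) (ha : γ a = γ' a) :
    EqOn γ γ' (Icc a b) := by
  obtain ⟨L, hL⟩ := hW.locallyLipschitzOn.exists_lipschitzOnWith_of_compact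
    ((isCompact_Icc.image_of_continuousOn hγ.continuousOn).union
      (isCompact_Icc.image_of_continuousOn hγ'.continuousOn))
  intro t ht
  have := hγ.dist_le_of_lipschitzOnWith hL hγ'
    (fun t ht ↦ .inl (mem_image_of_mem _ (Ico_subset_Icc_self ht)))
    (fun t ht ↦ .inr (mem_image_of_mem _ (Ico_subset_Icc_self ht))) t ht
  rwa [ha, dist_self, zero_mul, dist_le_zero] at this

theorem IsIntegralCurveOn.comp_const_sub (h : IsIntegralCurveOn γ (fun _ ↦ W) (Icc 0 t)) :
    IsIntegralCurveOn (fun s ↦ γ (t - s)) (fun _ ↦ -W) (Icc 0 t) := fun s hs ↦ by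
  have := (h (t - s) ⟨by linarith [hs.2], by linarith [hs.1]⟩).scomp s
    ((hasDerivAt_id s).const_sub t).hasDerivWithinAt
    fun u (hu : u ∈ Icc 0 t) ↦ (⟨by linarith [hu.2], by linarith [hu.1]⟩ : t - u ∈ Icc 0 t)
  simpa [Function.comp_def] using this

end IntegralCurve

section Existence

variable {E : Type*} [NormedAddCommGroup E] [NormedSpace ℝ E] [CompleteSpace E]
  {W : E → E} {M : ℝ≥0}

theorem LocallyLipschitz.exists_forall_closedBall_isIntegralCurveOn (hW : LocallyLipschitz W)
    (hWb : ∀ x, ‖W x‖ ≤ M) (y : E) :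
    ∃ r > 0, ∃ ε > 0, ∀ x ∈ closedBall y r, ∀ t₀ : ℝ,
      ∃ γ : ℝ → E, γ t₀ = x ∧ IsIntegralCurveOn γ (fun _ ↦ W) (Icc t₀ (t₀ + ε)) := by
  obtain ⟨K, s, hs, hK⟩ := hW y
  obtain ⟨a, ha, has⟩ := nhds_basis_closedBall.mem_iff.1 hs
  have hε : 0 < a / (2 * (M + 1)) := by positivity
  refine ⟨a / 2, by positivity, _, hε, fun x hx t₀ ↦ ?_⟩
  have hpl : IsPicardLindelof (fun _ ↦ W) (tmin := t₀) (tmax := t₀ + a / (2 * (M + 1)))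
      ⟨t₀, left_mem_Icc.2 (by linarith)⟩ y ⟨a, ha.le⟩ ⟨a / 2, by positivity⟩ M K := by
    refine .of_time_independent (fun x _ ↦ hWb x) (hK.mono has) ?_
    simp only [add_sub_cancel_left, sub_self, max_eq_left hε.le]
    calc (M : ℝ) * (a / (2 * (M + 1))) ≤ (M + 1) * (a / (2 * (M + 1))) := by gcongr; linarith
      _ = a - a / 2 := by field_simp; ring
  exact hpl.exists_eq_forall_mem_Icc_hasDerivWithinAt hx

theorem LocallyLipschitz.exists_gt_isIntegralCurveOn_Icc (hW : LocallyLipschitz W)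
    (hWb : ∀ x, ‖W x‖ ≤ M) {x : E} {m : ℝ} (hm : 0 < m)
    (h : ∀ t ∈ Ico 0 m, ∃ γ : ℝ → E, γ 0 = x ∧ IsIntegralCurveOn γ (fun _ ↦ W) (Icc 0 t)) :
    ∃ m' > m, ∃ γ : ℝ → E, γ 0 = x ∧ IsIntegralCurveOn γ (fun _ ↦ W) (Icc 0 m') := by
  -- the solutions on `[0, t]`, `t < m`, patch to a Lipschitz curve on `[0, m)`; it converges at
  -- `m`, and restarting close to the limit with the uniform existence time overshoots `m`
  choose γ hγ0 hγ using h
  set Γ : ℝ → E := fun s ↦ if hs : s ∈ Ico 0 m then γ s hs s else x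
  have hΓ : ∀ t (ht : t ∈ Ico 0 m), EqOn Γ (γ t ht) (Icc 0 t) := fun t ht s hs ↦ by
    have hs' : s ∈ Ico 0 m := ⟨hs.1, hs.2.trans_lt ht.2⟩
    simp only [Γ, dif_pos hs']
    exact (hγ s hs').eqOn_of_locallyLipschitz hW ((hγ t ht).mono (Icc_subset_Icc_right hs.2))
      ((hγ0 s hs').trans (hγ0 t ht).symm) ⟨hs.1, le_rfl⟩
  have hΓlip : LipschitzOnWith M Γ (Ico 0 m) := fun s hs t ht ↦ by
    have hu : max s t ∈ Ico 0 m := ⟨hs.1.trans (le_max_left _ _), max_lt hs.2 ht.2⟩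
    have hsu : s ∈ Icc 0 (max s t) := ⟨hs.1, le_max_left _ _⟩
    have htu : t ∈ Icc 0 (max s t) := ⟨ht.1, le_max_right _ _⟩
    rw [hΓ _ hu hsu, hΓ _ hu htu]
    exact ((hγ _ hu).lipschitzOnWith (convex_Icc _ _) hWb) hsu htu
  obtain ⟨y, hy⟩ := hΓlip.exists_tendsto_nhdsLT hm
  obtain ⟨r, hr, ε, hε, hloc⟩ := hW.exists_forall_closedBall_isIntegralCurveOn hWb y
  obtain ⟨t₁, hΓt₁, ht₁⟩ : ∃ t₁, Γ t₁ ∈ closedBall y r ∧ t₁ ∈ Ioo (max 0 (m - ε)) m :=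
    ((hy.eventually (closedBall_mem_nhds y hr)).and
      (Ioo_mem_nhdsLT (max_lt hm (by linarith)))).exists
  have ht₁m : t₁ ∈ Ico 0 m := ⟨(le_max_left _ _).trans ht₁.1.le, ht₁.2⟩
  obtain ⟨β, hβ0, hβ⟩ := hloc _ hΓt₁ t₁
  refine ⟨t₁ + ε, by linarith [le_max_right 0 (m - ε), ht₁.1], _, ?_,
    (hγ t₁ ht₁m).concat_Icc hβ ?_ ht₁m.1 (by linarith)⟩
  · simpa [ht₁m.1] using hγ0 t₁ ht₁m
  · rw [hβ0, hΓ t₁ ht₁m ⟨ht₁m.1, le_rfl⟩]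

theorem LocallyLipschitz.exists_isIntegralCurveOn_Icc (hW : LocallyLipschitz W)
    (hWb : ∀ x, ‖W x‖ ≤ M) (x : E) (T : ℝ) :
    ∃ γ : ℝ → E, γ 0 = x ∧ IsIntegralCurveOn γ (fun _ ↦ W) (Icc 0 T) := by
  set G := {t | ∃ γ : ℝ → E, γ 0 = x ∧ IsIntegralCurveOn γ (fun _ ↦ W) (Icc 0 t)}
  have hG : ∀ t ∈ G, ∀ s ≤ t, s ∈ G := fun t ⟨γ, hγ0, hγ⟩ s hs ↦
    ⟨γ, hγ0, hγ.mono (Icc_subset_Icc_right hs)⟩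
  by_contra hT
  have hGT : ∀ t ∈ G, t < T := fun t ht ↦ not_le.1 fun hTt ↦ hT (hG t ht T hTt)
  obtain ⟨r, hr, ε, hε, hloc⟩ := hW.exists_forall_closedBall_isIntegralCurveOn hWb x
  obtain ⟨γ₀, hγ₀, hγ₀'⟩ := hloc x (mem_closedBall_self hr.le) 0
  have hεG : ε ∈ G := ⟨γ₀, hγ₀, by simpa using hγ₀'⟩
  have hbdd : BddAbove G := ⟨T, fun t ht ↦ (hGT t ht).le⟩
  obtain ⟨m', hm', hm'G⟩ := hW.exists_gt_isIntegralCurveOn_Icc hWb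
    (hε.trans_le (le_csSup hbdd hεG)) fun t ht ↦ by
      obtain ⟨s, hs, hts⟩ := exists_lt_of_lt_csSup ⟨ε, hεG⟩ ht.2
      exact hG s hs t hts.le
  exact (le_csSup hbdd hm'G).not_gt hm'

end Existence

section Flow

variable {E : Type*} [NormedAddCommGroup E] [NormedSpace ℝ E]
  {W : E → E} {M : ℝ≥0} {φ ψ : ℝ → E → E}

/-- Only nonnegative times are constrained: `φ t` is arbitrary for `t < 0`. -/
def IsForwardFlow (W : E → E) (φ : ℝ → E → E) : Prop :=
  ∀ x, φ 0 x = x ∧ IsIntegralCurveOn (φ · x) (fun _ ↦ W) (Ici 0)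

theorem LocallyLipschitz.exists_isForwardFlow [CompleteSpace E] (hW : LocallyLipschitz W)
    (hWb : ∀ x, ‖W x‖ ≤ M) : ∃ φ, IsForwardFlow W φ := by
  choose γ hγ0 hγ using hW.exists_isIntegralCurveOn_Icc hWb
  have hγT : ∀ x T, EqOn (fun t ↦ γ x t t) (γ x T) (Icc 0 T) := fun x T t ht ↦
    ((hγ x t).eqOn_of_locallyLipschitz hW ((hγ x T).mono (Icc_subset_Icc_right ht.2))
      ((hγ0 x t).trans (hγ0 x T).symm)) ⟨ht.1, le_rfl⟩
  refine ⟨fun t x ↦ γ x t t, fun x ↦ ⟨hγT x 0 ⟨le_rfl, le_rfl⟩ |>.trans (hγ0 x 0), fun t ht ↦ ?_⟩⟩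
  exact ((hγ x (t + 1)).congr (hγT x (t + 1)) t ⟨ht, by linarith⟩).mono_of_mem_nhdsWithin
    (Icc_mem_nhdsWithin_Ici_of_mem ⟨ht, by linarith⟩)

namespace IsForwardFlow

theorem isIntegralCurveOn_Icc (hφ : IsForwardFlow W φ) (x : E) (T : ℝ) :
    IsIntegralCurveOn (φ · x) (fun _ ↦ W) (Icc 0 T) :=
  (hφ x).2.mono Icc_subset_Ici_self

theorem apply_eq_self (hW : LocallyLipschitz W) (hφ : IsForwardFlow W φ) {x : E} (hx : W x = 0)
    {t : ℝ} (ht : 0 ≤ t) : φ t x = x :=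
  (hφ.isIntegralCurveOn_Icc x t).eqOn_of_locallyLipschitz hW
    ((isIntegralCurve_const fun _ ↦ hx).isIntegralCurveOn _) (hφ x).1 ⟨ht, le_rfl⟩

theorem apply_apply_of_neg (hW : LocallyLipschitz W) (hφ : IsForwardFlow W φ)
    (hψ : IsForwardFlow (-W) ψ) (x : E) {t : ℝ} (ht : 0 ≤ t) : ψ t (φ t x) = x := by
  have := (hψ.isIntegralCurveOn_Icc (φ t x) t).eqOn_of_locallyLipschitz hW.neg
    (hφ.isIntegralCurveOn_Icc x t).comp_const_sub (by simp [(hψ _).1]) ⟨ht, le_rfl⟩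
  simpa [(hφ x).1] using this

theorem dist_le (hφ : IsForwardFlow W φ) (hWb : ∀ x, ‖W x‖ ≤ M) (x : E) {t : ℝ} (ht : 0 ≤ t) :
    dist (φ t x) x ≤ M * t := by
  have := ((hφ x).2.lipschitzOnWith (convex_Ici 0) hWb).dist_le_mul t ht 0 (mem_Ici.2 le_rfl)
  rwa [(hφ x).1, Real.dist_eq, sub_zero, abs_of_nonneg ht] at this

theorem continuousOn (hW : LocallyLipschitz W) (hWb : ∀ x, ‖W x‖ ≤ M) (hφ : IsForwardFlow W φ) :
    ContinuousOn (fun p : ℝ × E ↦ φ p.1 p.2) (Ici 0 ×ˢ univ) := by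
  rintro ⟨t₀, x₀⟩ ⟨ht₀, -⟩
  set T := t₀ + 1
  set K := (φ · x₀) '' Icc 0 T
  obtain ⟨r, hr, L, hL⟩ := hW.exists_lipschitzOnWith_thickening hWb
    (isCompact_Icc.image_of_continuousOn (hφ.isIntegralCurveOn_Icc x₀ T).continuousOn)
  set ρ := r / 2 * exp (-(L * T))
  have hρ : 0 < ρ := by positivity
  have hstay : ∀ x ∈ ball x₀ ρ, ∀ s ∈ Ico 0 T, φ s x ∈ thickening r K := fun x hx s hs ↦ by
    have hxρ : dist x x₀ * exp (L * T) < r / 2 := by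
      calc dist x x₀ * exp (L * T) < ρ * exp (L * T) := by gcongr; exact hx
        _ = r / 2 := by rw [mul_assoc, ← exp_add, neg_add_cancel, exp_zero, mul_one]
    have := (hφ.isIntegralCurveOn_Icc x T).dist_le_of_lipschitzOnWith_thickening hL
      (hφ.isIntegralCurveOn_Icc x₀ T)
      (by simpa [(hφ x).1, (hφ x₀).1] using hxρ.trans (half_lt_self hr)) s (Ico_subset_Icc_self hs)
    rw [(hφ x).1, (hφ x₀).1, sub_zero] at this
    refine mem_thickening_iff.2 ⟨φ s x₀, mem_image_of_mem _ (Ico_subset_Icc_self hs), ?_⟩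
    calc dist (φ s x) (φ s x₀) ≤ dist x x₀ * exp (L * s) := this
      _ ≤ dist x x₀ * exp (L * T) := by gcongr; exact hs.2.le
      _ < r := hxρ.trans (half_lt_self hr)
  have hlip : ∀ s ∈ Icc 0 T, LipschitzOnWith (exp (L * T)).toNNReal (φ s) (ball x₀ ρ) :=
    fun s hs ↦ LipschitzOnWith.of_dist_le' fun x hx y hy ↦ by
      have := (hφ.isIntegralCurveOn_Icc x T).dist_le_of_lipschitzOnWith hL
        (hφ.isIntegralCurveOn_Icc y T) (hstay x hx) (hstay y hy) s hs
      rw [(hφ x).1, (hφ y).1, sub_zero] at this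
      exact this.trans (by rw [mul_comm]; gcongr; exact hs.2)
  have hcont : ContinuousOn (fun p : ℝ × E ↦ φ p.1 p.2) (Icc 0 T ×ˢ ball x₀ ρ) :=
    continuousOn_prod_of_continuousOn_lipschitzOnWith' _ _ hlip
      fun x _ ↦ (hφ.isIntegralCurveOn_Icc x T).continuousOn
  refine (hcont _ ⟨⟨ht₀, by linarith⟩, mem_ball_self hρ⟩).mono_of_mem_nhdsWithin ?_
  rw [nhdsWithin_prod_eq]
  exact prod_mem_prod (Icc_mem_nhdsWithin_Ici_of_mem ⟨ht₀, by linarith⟩)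
    (nhdsWithin_le_nhds (ball_mem_nhds _ hρ))

theorem isHomeomorph [CompleteSpace E] (hW : LocallyLipschitz W) (hWb : ∀ x, ‖W x‖ ≤ M)
    (hφ : IsForwardFlow W φ) {t : ℝ} (ht : 0 ≤ t) : IsHomeomorph (φ t) := by
  obtain ⟨ψ, hψ⟩ := hW.neg.exists_isForwardFlow (M := M) (by simpa using hWb)
  have hφ' : IsForwardFlow (-(-W)) φ := by rwa [neg_neg]
  have hslice : Continuous fun x : E ↦ (t, x) := continuous_const.prodMk continuous_id
  rw [isHomeomorph_iff_exists_inverse]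
  exact ⟨(hφ.continuousOn hW hWb).comp_continuous hslice fun _ ↦ ⟨ht, trivial⟩, ψ t,
    fun x ↦ hφ.apply_apply_of_neg hW hψ x ht, fun x ↦ hψ.apply_apply_of_neg hW.neg hφ' x ht,
    (hψ.continuousOn hW.neg (by simpa using hWb)).comp_continuous hslice fun _ ↦ ⟨ht, trivial⟩⟩

theorem apply_le_sub_mul {Φ : E → ℝ} (hΦ : Differentiable ℝ Φ) (hφ : IsForwardFlow W φ) {x : E}
    {a b κ : ℝ} (ha : 0 ≤ a) (hab : a ≤ b)
    (h : ∀ s ∈ Ico a b, fderiv ℝ Φ (φ s x) (W (φ s x)) ≤ -κ) :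
    Φ (φ b x) ≤ Φ (φ a x) - κ * (b - a) := by
  have hderiv : ∀ s ∈ Ici (0 : ℝ), HasDerivWithinAt (fun s ↦ Φ (φ s x))
      (fderiv ℝ Φ (φ s x) (W (φ s x))) (Ici 0) s := fun s hs ↦
    (hΦ _).hasFDerivAt.comp_hasDerivWithinAt s ((hφ x).2 s hs)
  refine image_le_of_deriv_right_le_deriv_boundary (B := fun s ↦ Φ (φ a x) - κ * (s - a))
    (fun s hs ↦ (hderiv s (ha.trans hs.1)).continuousWithinAt.mono
      fun u hu ↦ ha.trans hu.1)
    (fun s hs ↦ (hderiv s (ha.trans hs.1)).mono (Ici_subset_Ici.2 (ha.trans hs.1)))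
    (by simp) (by fun_prop) (fun s _ ↦ ?_) h ⟨hab, le_rfl⟩
  simpa using (((hasDerivAt_id s).sub_const a).const_mul κ).const_sub (Φ (φ a x))
    |>.hasDerivWithinAt (s := Ici s)

theorem apply_le_of_descent {Φ : E → ℝ} (hΦ : Differentiable ℝ Φ) (hφ : IsForwardFlow W φ)
    {x : E} {a b κ T : ℝ} (hT : 0 ≤ T) (hW₀ : ∀ u, fderiv ℝ Φ u (W u) ≤ 0)
    (hWκ : ∀ s ∈ Icc 0 T, a ≤ Φ (φ s x) → Φ (φ s x) ≤ b →
      fderiv ℝ Φ (φ s x) (W (φ s x)) ≤ -κ)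
    (hκ : b - a ≤ κ * T) (hx : Φ x ≤ b) : Φ (φ T x) ≤ a := by
  by_contra! hlt
  have hanti : ∀ s₁ s₂, 0 ≤ s₁ → s₁ ≤ s₂ → Φ (φ s₂ x) ≤ Φ (φ s₁ x) := fun s₁ s₂ h₁ h₁₂ ↦ by
    simpa using hφ.apply_le_sub_mul hΦ h₁ h₁₂ (κ := 0) fun s _ ↦ by simpa using hW₀ _
  have := hφ.apply_le_sub_mul hΦ le_rfl hT (κ := κ) fun s hs ↦
    hWκ s (Ico_subset_Icc_self hs) (hlt.le.trans (hanti s T hs.1 hs.2.le))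
      ((hanti 0 s le_rfl hs.1).trans (by rwa [(hφ x).1]))
  rw [(hφ x).1, sub_zero] at this
  linarith

end IsForwardFlow

end Flow

section Slab

variable {α : Type*} [PseudoMetricSpace α] {U : Set α} {Φ : α → ℝ} {r a b r' a' b' : ℝ}

def slab (U : Set α) (Φ : α → ℝ) (r a b : ℝ) : Set α :=
  {u | infDist u U ≤ r ∧ a ≤ Φ u ∧ Φ u ≤ b}

theorem isClosed_slab (hΦ : Continuous Φ) : IsClosed (slab U Φ r a b) :=
  (isClosed_le (continuous_infDist_pt U) continuous_const).inter
    ((isClosed_le continuous_const hΦ).inter (isClosed_le hΦ continuous_const))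

theorem slab_subset_interior_slab (hΦ : Continuous Φ) (hr : r < r') (ha : a' < a) (hb : b < b') :
    slab U Φ r a b ⊆ interior (slab U Φ r' a' b') := by
  set O := {u | infDist u U < r' ∧ a' < Φ u ∧ Φ u < b'}
  have hO : IsOpen O := (isOpen_lt (continuous_infDist_pt U) continuous_const).inter
    ((isOpen_lt continuous_const hΦ).inter (isOpen_lt hΦ continuous_const))
  intro u hu
  have huO : u ∈ O := ⟨hu.1.trans_lt hr, ha.trans_le hu.2.1, hu.2.2.trans_lt hb⟩
  exact hO.subset_interior_iff.2
    (fun v hv ↦ show v ∈ slab U Φ r' a' b' from ⟨hv.1.le, hv.2.1.le, hv.2.2.le⟩) huO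

end Slab

theorem ContinuousLinearMap.opNorm_le_of_sq_opNorm_le_apply {E : Type*} [SeminormedAddCommGroup E]
    [NormedSpace ℝ E] {f : E →L[ℝ] ℝ} {v : E} (h : ‖f‖ ^ 2 ≤ f v) : ‖f‖ ≤ ‖v‖ := by
  have := (le_abs_self _).trans (f.le_opNorm v)
  rcases (norm_nonneg f).eq_or_lt with h0 | h0
  · exact h0 ▸ norm_nonneg v
  · nlinarith

theorem exists_localized_descent_field {E : Type*} [NormedAddCommGroup E] [NormedSpace ℝ E]
    {D : E → E →L[ℝ] ℝ} {V : E → E} {A N : Set E} {μ : ℝ} (hμ : 0 < μ)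
    (hV : LocallyLipschitz V) (hA : IsClosed A) (hAN : A ⊆ interior N)
    (hD : ∀ u ∈ N, μ ≤ ‖D u‖) (hV₁ : ∀ u ∈ N, ‖V u‖ ≤ 2 * ‖D u‖)
    (hV₂ : ∀ u ∈ N, ‖D u‖ ^ 2 ≤ D u (V u)) :
    ∃ W : E → E, LocallyLipschitz W ∧ (∀ u, ‖W u‖ ≤ μ⁻¹) ∧ (∀ u ∉ N, W u = 0) ∧
      (∀ u, D u (W u) ≤ 0) ∧ ∀ u ∈ A, D u (W u) ≤ -(1 / 4) := by
  obtain ⟨χ, hχ, hχ01, hχA, hχN⟩ := exists_locallyLipschitz_cutoff hA hAN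
  have hμV : ∀ u ∈ N, μ ≤ ‖V u‖ := fun u hu ↦
    (hD u hu).trans (ContinuousLinearMap.opNorm_le_of_sq_opNorm_le_apply (hV₂ u hu))
  set q : E → ℝ := fun u ↦ max ‖V u‖ μ
  have hq : ∀ u, 0 < q u := fun u ↦ hμ.trans_le (le_max_right _ _)
  have hqN : ∀ u ∈ N, q u = ‖V u‖ := fun u hu ↦ max_eq_left (hμV u hu)
  refine ⟨fun u ↦ -(χ u / q u ^ 2) • V u, ?_, fun u ↦ ?_, fun u hu ↦ ?_, fun u ↦ ?_, fun u hu ↦ ?_⟩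
  · have hχqV : LocallyLipschitz fun u ↦ (χ u, q u, V u) :=
      hχ.prodMk ((lipschitzWith_one_norm.locallyLipschitz.comp hV).max_const μ |>.prodMk hV)
    exact hχqV.contDiffAt_comp (g := fun p : ℝ × ℝ × E ↦ -(p.1 / p.2.1 ^ 2) • p.2.2)
      fun u ↦ (contDiffAt_fst.div (contDiffAt_snd.fst.pow 2) (pow_ne_zero 2 (hq u).ne')).neg.smul
        contDiffAt_snd.snd
  · calc ‖-(χ u / q u ^ 2) • V u‖ = χ u / q u ^ 2 * ‖V u‖ := by
          rw [norm_smul, norm_neg, Real.norm_of_nonneg (div_nonneg (hχ01 u).1 (by positivity))]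
      _ ≤ 1 / q u ^ 2 * q u := by
          gcongr
          exacts [(hχ01 u).2, le_max_left _ _]
      _ = (q u)⁻¹ := by field_simp [(hq u).ne']
      _ ≤ μ⁻¹ := inv_anti₀ hμ (le_max_right _ _)
  · simp [hχN hu]
  · have : 0 ≤ χ u / q u ^ 2 * D u (V u) := by
      by_cases hu : u ∈ N
      · exact mul_nonneg (div_nonneg (hχ01 u).1 (by positivity)) ((sq_nonneg _).trans (hV₂ u hu))
      · simp [hχN hu]
    simpa using this
  · have huN : u ∈ N := interior_subset (hAN hu)
    have hV0 : 0 < ‖V u‖ := hμ.trans_le (hμV u huN)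
    have : ‖V u‖ ^ 2 ≤ 4 * D u (V u) := by nlinarith [hV₁ u huN, hV₂ u huN, norm_nonneg (D u)]
    have : 1 / 4 ≤ 1 / ‖V u‖ ^ 2 * D u (V u) := by
      rw [div_mul_eq_mul_div, le_div_iff₀ (by positivity)]
      linarith
    simpa [hχA hu, hqN u huN] using this

theorem localized_deformation_lemma_general {E : Type*} [NormedAddCommGroup E]
    [NormedSpace ℝ E] [CompleteSpace E]
    (Φ : E → ℝ) (hΦ : ContDiff ℝ 1 Φ)
    (c δ μ η ηbar : ℝ)
    (hδ : 0 < δ) (hμ0 : 0 < μ) (hμ1 : μ ≤ 1)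
    (hηbarη : ηbar < η) (hsmall : 8 * ηbar ≤ δ * μ ^ 2)
    (U : Set E)
    (N : Set E)
    (hN : N = {u : E | Metric.infDist u U ≤ 2 * δ ∧ c - η ≤ Φ u ∧ Φ u ≤ c + η})
    (hgrad : ∀ u ∈ N, μ ≤ ‖fderiv ℝ Φ u‖)
    (V : E → E) (hVlip : LocallyLipschitz V)
    (hV1 : ∀ u ∈ N, ‖V u‖ ≤ 2 * ‖fderiv ℝ Φ u‖)
    (hV2 : ∀ u ∈ N, ‖fderiv ℝ Φ u‖ ^ 2 ≤ fderiv ℝ Φ u (V u)) :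
    ∃ F : ℝ → E → E,
      Continuous (fun p : ℝ × E => F p.1 p.2) ∧
      (∀ u : E, F 0 u = u) ∧
      (∀ t ∈ Set.Icc (0 : ℝ) 1, ∀ u ∉ N, F t u = u) ∧
      (∀ u ∈ U, Φ u ≤ c + ηbar →
        Metric.infDist (F 1 u) U ≤ δ ∧ Φ (F 1 u) ≤ c - ηbar) ∧
      (∀ t ∈ Set.Icc (0 : ℝ) 1, IsHomeomorph (F t)) := by
  have hΦc : Continuous Φ := hΦ.continuous
  obtain ⟨W, hWlip, hWb, hW0, hW_le, hW_A⟩ := exists_localized_descent_field hμ0 hVlip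
    (isClosed_slab hΦc (U := U) (r := δ) (a := c - ηbar) (b := c + ηbar))
    (hN ▸ slab_subset_interior_slab hΦc (by linarith) (by linarith) (by linarith)) hgrad hV1 hV2
  set M : ℝ≥0 := ⟨μ⁻¹, by positivity⟩
  replace hWb : ∀ u, ‖W u‖ ≤ M := hWb
  obtain ⟨φ, hφ⟩ := hWlip.exists_isForwardFlow hWb
  have hT : 0 ≤ δ * μ := by positivity
  have hdist : ∀ u ∈ U, ∀ s ∈ Icc 0 (δ * μ), infDist (φ s u) U ≤ δ := fun u hu s hs ↦
    calc infDist (φ s u) U ≤ dist (φ s u) u := infDist_le_dist_of_mem hu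
      _ ≤ μ⁻¹ * (δ * μ) := (hφ.dist_le hWb u hs.1).trans (mul_le_mul_of_nonneg_left hs.2 M.2)
      _ = δ := by field_simp
  have hF : ∀ t, 0 ≤ δ * μ * max t 0 := fun t ↦ mul_nonneg hT (le_max_right _ _)
  refine ⟨fun t u ↦ φ (δ * μ * max t 0) u, ?_, fun u ↦ by simpa using (hφ u).1,
    fun t _ u hu ↦ hφ.apply_eq_self hWlip (hW0 u hu) (hF t), fun u hu hΦu ↦ ?_,
    fun t _ ↦ hφ.isHomeomorph hWlip hWb (hF t)⟩
  · exact (hφ.continuousOn hWlip hWb).comp_continuous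
      (by fun_prop : Continuous fun p : ℝ × E ↦ (δ * μ * max p.1 0, p.2)) fun p ↦ ⟨hF p.1, trivial⟩
  · simp only [max_eq_left zero_le_one, mul_one]
    refine ⟨hdist u hu _ ⟨hT, le_rfl⟩, hφ.apply_le_of_descent (hΦ.differentiable one_ne_zero) hT
      hW_le (fun s hs h₁ h₂ ↦ hW_A _ ⟨hdist u hu s hs, h₁, h₂⟩) ?_ hΦu⟩
    nlinarith

/-- Localized quantitative deformation lemma in a Banach space: given a `C¹` functional
`Φ` whose gradient has norm at least `μ` on the localized slab
`N = {u ∈ U_{2δ} : c - η ≤ Φ(u) ≤ c + η}`, and a locally Lipschitz pseudogradient field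
`V` for `Φ` on `N`, there is a continuous deformation `F` which is the identity at time
`0` and outside `N`, moves `{Φ ≤ c + η̄} ∩ U` into `{Φ ≤ c - η̄} ∩ U_δ` at time `1`,
and is a homeomorphism at each time. -/
theorem localized_deformation_lemma {E : Type*} [NormedAddCommGroup E]
    [NormedSpace ℝ E] [CompleteSpace E]
    (Φ : E → ℝ) (hΦ : ContDiff ℝ 1 Φ)
    (c δ μ η ηbar : ℝ)
    (hδ : 0 < δ) (hμ0 : 0 < μ) (hμ1 : μ ≤ 1)
    (hηbar : 0 < ηbar) (hηbarη : ηbar < η) (hsmall : 8 * ηbar ≤ δ * μ ^ 2)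
    (U : Set E) (hU : U.Nonempty)
    (N : Set E)
    (hN : N = {u : E | Metric.infDist u U ≤ 2 * δ ∧ c - η ≤ Φ u ∧ Φ u ≤ c + η})
    (hgrad : ∀ u ∈ N, μ ≤ ‖fderiv ℝ Φ u‖)
    (V : E → E) (hVlip : LocallyLipschitz V)
    (hV1 : ∀ u ∈ N, ‖V u‖ ≤ 2 * ‖fderiv ℝ Φ u‖)
    (hV2 : ∀ u ∈ N, ‖fderiv ℝ Φ u‖ ^ 2 ≤ fderiv ℝ Φ u (V u)) :
    ∃ F : ℝ → E → E,
      Continuous (fun p : ℝ × E => F p.1 p.2) ∧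
      (∀ u : E, F 0 u = u) ∧
      (∀ t ∈ Set.Icc (0 : ℝ) 1, ∀ u ∉ N, F t u = u) ∧
      (∀ u ∈ U, Φ u ≤ c + ηbar →
        Metric.infDist (F 1 u) U ≤ δ ∧ Φ (F 1 u) ≤ c - ηbar) ∧
      (∀ t ∈ Set.Icc (0 : ℝ) 1, IsHomeomorph (F t)) :=
  localized_deformation_lemma_general Φ hΦ c δ μ η ηbar hδ hμ0 hμ1 hηbarη hsmall U N hN hgrad V
    hVlip hV1 hV2
end

section
/- One-parameter min-max comparison via a deformation map: let E be a normed vector space, Φ : E → ℝ continuous, U ⊆ U' ⊆ E, and u₀, u₁ ∈ U. Let 𝒫 := {p : [0,1] → E continuous : p(0) = u₀, p(1) = u₁, p(t) ∈ U for all t} and 𝒫' the analogous class of paths taking values in U', and suppose 𝒫 ≠ ∅. Set d := inf_{p ∈ 𝒫} max_{t ∈ [0,1]} Φ(p(t)) and d' := inf_{p ∈ 𝒫'} max_{t ∈ [0,1]} Φ(p(t)). Suppose η̄ > 0 and F : E → E is continuous with F(u₀) = u₀, F(u₁) = u₁, and such that for every u ∈ U with Φ(u) ≤ d + η̄ one has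 F(u) ∈ U' and Φ(F(u)) ≤ d − η̄. Then d' ≤ d − η̄. -/
/-!
Take a path `p` in the class over `U` whose maximum of `Φ` lies within `η̄` of the min-max value `d`.
Every point of `p` then satisfies `Φ ≤ d + η̄`, so the deformed path `F ∘ p` is admissible for
the class over `U'` and `Φ ≤ d - η̄` along it; hence `d' ≤ d - η̄`.
-/

open Set

section MinMax

variable {X : Type*}

noncomputable def pathMax (Φ : X → ℝ) (p : ℝ → X) : ℝ := sSup (Φ '' (p '' Icc 0 1))

noncomputable def minmax (Φ : X → ℝ) (P : Set (ℝ → X)) : ℝ := sInf (pathMax Φ '' P)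

theorem pathMax_le {Φ : X → ℝ} {p : ℝ → X} {c : ℝ}
    (h : ∀ t ∈ Icc (0 : ℝ) 1, Φ (p t) ≤ c) : pathMax Φ p ≤ c := by
  refine csSup_le ((nonempty_Icc.2 zero_le_one).image p |>.image Φ) ?_
  rintro _ ⟨_, ⟨t, ht, rfl⟩, rfl⟩
  exact h t ht

theorem exists_pathMax_lt_minmax_add {Φ : X → ℝ} {P : Set (ℝ → X)} (hP : P.Nonempty)
    {ε : ℝ} (hε : 0 < ε) : ∃ p ∈ P, pathMax Φ p < minmax Φ P + ε := by
  obtain ⟨_, ⟨p, hp, rfl⟩, hlt⟩ := Real.lt_sInf_add_pos (hP.image (pathMax Φ)) hε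
  exact ⟨p, hp, hlt⟩

variable [TopologicalSpace X]

def pathClass (U : Set X) (u₀ u₁ : X) : Set (ℝ → X) :=
  {p | ContinuousOn p (Icc 0 1) ∧ p 0 = u₀ ∧ p 1 = u₁ ∧ ∀ t ∈ Icc (0 : ℝ) 1, p t ∈ U}

theorem le_pathMax {Φ : X → ℝ} (hΦ : Continuous Φ) {p : ℝ → X}
    (hp : ContinuousOn p (Icc 0 1)) {t : ℝ} (ht : t ∈ Icc 0 1) :
    Φ (p t) ≤ pathMax Φ p :=
  le_csSup ((isCompact_Icc.image_of_continuousOn hp).image hΦ).bddAbove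
    (mem_image_of_mem Φ (mem_image_of_mem p ht))

theorem comp_mem_pathClass {U U' : Set X} {u₀ u₁ : X} {F : X → X} (hF : Continuous F)
    (hF0 : F u₀ = u₀) (hF1 : F u₁ = u₁) {p : ℝ → X} (hp : p ∈ pathClass U u₀ u₁)
    (hFp : ∀ t ∈ Icc (0 : ℝ) 1, F (p t) ∈ U') : F ∘ p ∈ pathClass U' u₀ u₁ := by
  obtain ⟨hpc, hp0, hp1, -⟩ := hp
  exact ⟨hF.comp_continuousOn hpc, by simp [hp0, hF0], by simp [hp1, hF1], hFp⟩

theorem bddBelow_pathMax_image_pathClass {Φ : X → ℝ} (hΦ : Continuous Φ) (U : Set X)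
    (u₀ u₁ : X) : BddBelow (pathMax Φ '' pathClass U u₀ u₁) := by
  refine ⟨Φ u₀, ?_⟩
  rintro _ ⟨p, ⟨hpc, hp0, -, -⟩, rfl⟩
  simpa [hp0] using le_pathMax hΦ hpc (left_mem_Icc.2 zero_le_one)

theorem minmax_pathClass_le_pathMax {Φ : X → ℝ} (hΦ : Continuous Φ) {U : Set X} {u₀ u₁ : X}
    {p : ℝ → X} (hp : p ∈ pathClass U u₀ u₁) :
    minmax Φ (pathClass U u₀ u₁) ≤ pathMax Φ p :=
  csInf_le (bddBelow_pathMax_image_pathClass hΦ U u₀ u₁) (mem_image_of_mem _ hp)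

end MinMax

theorem one_parameter_minmax_comparison_general {E : Type*} [NormedAddCommGroup E]
    (Φ : E → ℝ) (hΦ : Continuous Φ)
    (U U' : Set E)
    (u₀ u₁ : E)
    (P P' : Set (ℝ → E))
    (hP : P = {p : ℝ → E | ContinuousOn p (Set.Icc 0 1) ∧ p 0 = u₀ ∧ p 1 = u₁ ∧
      ∀ t ∈ Set.Icc (0 : ℝ) 1, p t ∈ U})
    (hP' : P' = {p : ℝ → E | ContinuousOn p (Set.Icc 0 1) ∧ p 0 = u₀ ∧ p 1 = u₁ ∧
      ∀ t ∈ Set.Icc (0 : ℝ) 1, p t ∈ U'})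
    (hPne : P.Nonempty)
    (d d' : ℝ)
    (hd : d = sInf ((fun p : ℝ → E => sSup (Φ '' (p '' Set.Icc (0 : ℝ) 1))) '' P))
    (hd' : d' = sInf ((fun p : ℝ → E => sSup (Φ '' (p '' Set.Icc (0 : ℝ) 1))) '' P'))
    (ηbar : ℝ) (hηbar : 0 < ηbar)
    (F : E → E) (hF : Continuous F) (hF0 : F u₀ = u₀) (hF1 : F u₁ = u₁)
    (hdef : ∀ u ∈ U, Φ u ≤ d + ηbar → F u ∈ U' ∧ Φ (F u) ≤ d - ηbar) :
    d' ≤ d - ηbar := by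
  change P = pathClass U u₀ u₁ at hP
  change P' = pathClass U' u₀ u₁ at hP'
  change d = minmax Φ P at hd
  change d' = minmax Φ P' at hd'
  subst hP hP' hd hd'
  obtain ⟨p, hp, hp_lt⟩ := exists_pathMax_lt_minmax_add hPne hηbar
  have hdeform : ∀ t ∈ Icc (0 : ℝ) 1,
      F (p t) ∈ U' ∧ Φ (F (p t)) ≤ minmax Φ (pathClass U u₀ u₁) - ηbar :=
    fun t ht => hdef (p t) (hp.2.2.2 t ht) ((le_pathMax hΦ hp.1 ht).trans hp_lt.le)
  calc minmax Φ (pathClass U' u₀ u₁) ≤ pathMax Φ (F ∘ p) :=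
        minmax_pathClass_le_pathMax hΦ
          (comp_mem_pathClass hF hF0 hF1 hp fun t ht => (hdeform t ht).1)
    _ ≤ _ := pathMax_le fun t ht => (hdeform t ht).2

/-- One-parameter min-max comparison via a deformation map: if `F` fixes the endpoints
`u₀, u₁` and maps every point of `U` with `Φ ≤ d + η̄` into `U'` while lowering `Φ`
below `d - η̄`, then the min-max value `d'` over the enlarged path class satisfies
`d' ≤ d - η̄`. -/
theorem one_parameter_minmax_comparison {E : Type*} [NormedAddCommGroup E]
    [NormedSpace ℝ E]
    (Φ : E → ℝ) (hΦ : Continuous Φ)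
    (U U' : Set E) (hUU' : U ⊆ U')
    (u₀ u₁ : E) (hu₀ : u₀ ∈ U) (hu₁ : u₁ ∈ U)
    (P P' : Set (ℝ → E))
    (hP : P = {p : ℝ → E | ContinuousOn p (Set.Icc 0 1) ∧ p 0 = u₀ ∧ p 1 = u₁ ∧
      ∀ t ∈ Set.Icc (0 : ℝ) 1, p t ∈ U})
    (hP' : P' = {p : ℝ → E | ContinuousOn p (Set.Icc 0 1) ∧ p 0 = u₀ ∧ p 1 = u₁ ∧
      ∀ t ∈ Set.Icc (0 : ℝ) 1, p t ∈ U'})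
    (hPne : P.Nonempty)
    (d d' : ℝ)
    (hd : d = sInf ((fun p : ℝ → E => sSup (Φ '' (p '' Set.Icc (0 : ℝ) 1))) '' P))
    (hd' : d' = sInf ((fun p : ℝ → E => sSup (Φ '' (p '' Set.Icc (0 : ℝ) 1))) '' P'))
    (ηbar : ℝ) (hηbar : 0 < ηbar)
    (F : E → E) (hF : Continuous F) (hF0 : F u₀ = u₀) (hF1 : F u₁ = u₁)
    (hdef : ∀ u ∈ U, Φ u ≤ d + ηbar → F u ∈ U' ∧ Φ (F u) ≤ d - ηbar) :
    d' ≤ d - ηbar :=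
  one_parameter_minmax_comparison_general Φ hΦ U U' u₀ u₁ P P' hP hP' hPne d d' hd hd' ηbar hηbar F
    hF hF0 hF1 hdef
end

section
/- l-parameter min-max comparison via a deformation map: let E be a normed vector space, Φ : E → ℝ continuous, U ⊆ U' ⊆ E, l ≥ 1, B^l the closed unit ball in ℝ^l, and γ₀ : ∂B^l → U continuous. Let 𝒫 := {p : B^l → E continuous : p(v) = γ₀(v) for all v ∈ ∂B^l, and p(v) ∈ U for all v ∈ B^l} and 𝒫' the analogous class of maps taking values in U', and suppose 𝒫 ≠ ∅. Set d := inf_{p ∈ 𝒫} max_{v ∈ B^l} Φ(p(v)) and d' := inf_{p ∈ 𝒫'} max_{v ∈ B^l} Φ(p(v)). Suppose η̄ > 0 and F : E → E is continuous with F(γ₀(v)) = γ₀(v) for every v ∈ ∂B^l, and such that for every u ∈ U with Φ(u) ≤ d + η̄ one has F(u) ∈ U' and Φ(F(u)) ≤ d − η̄. Then d' ≤ d − η̄. -/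
/-- `l`-parameter min-max comparison via a deformation map: if `F` fixes the boundary
data `γ₀` on `∂B^l` and maps every point of `U` with `Φ ≤ d + η̄` into `U'` while
lowering `Φ` below `d - η̄`, then the min-max value `d'` over the enlarged class of
`l`-parameter families satisfies `d' ≤ d - η̄`. -/
theorem l_parameter_minmax_comparison {E : Type*} [NormedAddCommGroup E]
    [NormedSpace ℝ E]
    (Φ : E → ℝ) (hΦ : Continuous Φ)
    (U U' : Set E) (hUU' : U ⊆ U')
    (l : ℕ) (hl : 1 ≤ l)
    (γ₀ : EuclideanSpace ℝ (Fin l) → E)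
    (hγ₀cont : ContinuousOn γ₀ (Metric.sphere (0 : EuclideanSpace ℝ (Fin l)) 1))
    (hγ₀U : ∀ v ∈ Metric.sphere (0 : EuclideanSpace ℝ (Fin l)) 1, γ₀ v ∈ U)
    (P P' : Set (EuclideanSpace ℝ (Fin l) → E))
    (hP : P = {p : EuclideanSpace ℝ (Fin l) → E |
      ContinuousOn p (Metric.closedBall (0 : EuclideanSpace ℝ (Fin l)) 1) ∧
      (∀ v ∈ Metric.sphere (0 : EuclideanSpace ℝ (Fin l)) 1, p v = γ₀ v) ∧
      ∀ v ∈ Metric.closedBall (0 : EuclideanSpace ℝ (Fin l)) 1, p v ∈ U})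
    (hP' : P' = {p : EuclideanSpace ℝ (Fin l) → E |
      ContinuousOn p (Metric.closedBall (0 : EuclideanSpace ℝ (Fin l)) 1) ∧
      (∀ v ∈ Metric.sphere (0 : EuclideanSpace ℝ (Fin l)) 1, p v = γ₀ v) ∧
      ∀ v ∈ Metric.closedBall (0 : EuclideanSpace ℝ (Fin l)) 1, p v ∈ U'})
    (hPne : P.Nonempty)
    (d d' : ℝ)
    (hd : d = sInf ((fun p : EuclideanSpace ℝ (Fin l) → E =>
      sSup (Φ '' (p '' Metric.closedBall (0 : EuclideanSpace ℝ (Fin l)) 1))) '' P))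
    (hd' : d' = sInf ((fun p : EuclideanSpace ℝ (Fin l) → E =>
      sSup (Φ '' (p '' Metric.closedBall (0 : EuclideanSpace ℝ (Fin l)) 1))) '' P'))
    (ηbar : ℝ) (hηbar : 0 < ηbar)
    (F : E → E) (hF : Continuous F)
    (hFγ : ∀ v ∈ Metric.sphere (0 : EuclideanSpace ℝ (Fin l)) 1, F (γ₀ v) = γ₀ v)
    (hdef : ∀ u ∈ U, Φ u ≤ d + ηbar → F u ∈ U' ∧ Φ (F u) ≤ d - ηbar) :
    d' ≤ d - ηbar := by

  classical
  set B := Metric.closedBall (0 : EuclideanSpace ℝ (Fin l)) 1 with hB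
  set Sph := Metric.sphere (0 : EuclideanSpace ℝ (Fin l)) 1 with hSph
  haveI : Nonempty (Fin l) := ⟨⟨0, hl⟩⟩
  have hSphne : Sph.Nonempty := NormedSpace.sphere_nonempty.mpr zero_le_one
  obtain ⟨v₀, hv₀⟩ := hSphne
  have hv₀B : v₀ ∈ B := Metric.sphere_subset_closedBall hv₀
  have hBne : B.Nonempty := ⟨v₀, hv₀B⟩
  have hBcpt : IsCompact B := isCompact_closedBall _ _
  -- every p ∈ P' has compact image value set, bounded below by Φ (γ₀ v₀)
  have key : ∀ p ∈ P', BddAbove (Φ '' (p '' B)) ∧ Φ (γ₀ v₀) ≤ sSup (Φ '' (p '' B)) := by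
    intro p hp
    rw [hP'] at hp
    obtain ⟨hpc, hpγ, hpU⟩ := hp
    have hcpt : IsCompact (Φ '' (p '' B)) :=
      ((hBcpt.image_of_continuousOn hpc).image hΦ)
    have hmem : Φ (γ₀ v₀) ∈ Φ '' (p '' B) := by
      refine ⟨p v₀, ⟨v₀, hv₀B, rfl⟩, ?_⟩
      rw [hpγ v₀ hv₀]
    exact ⟨hcpt.bddAbove, le_csSup hcpt.bddAbove hmem⟩
  have hPP' : P ⊆ P' := by
    rw [hP, hP']
    rintro p ⟨h1, h2, h3⟩
    exact ⟨h1, h2, fun v hv => hUU' (h3 v hv)⟩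
  -- the value set over P' is bounded below
  have hbdd' : BddBelow ((fun p : EuclideanSpace ℝ (Fin l) → E =>
      sSup (Φ '' (p '' B))) '' P') := by
    refine ⟨Φ (γ₀ v₀), ?_⟩
    rintro x ⟨p, hp, rfl⟩
    exact (key p hp).2
  have hbdd : BddBelow ((fun p : EuclideanSpace ℝ (Fin l) → E =>
      sSup (Φ '' (p '' B))) '' P) := hbdd'.mono (Set.image_mono hPP')
  -- pick p ∈ P with value < d + ηbar
  have hne : ((fun p : EuclideanSpace ℝ (Fin l) → E =>
      sSup (Φ '' (p '' B))) '' P).Nonempty := hPne.image _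
  have hlt : sInf ((fun p : EuclideanSpace ℝ (Fin l) → E =>
      sSup (Φ '' (p '' B))) '' P) < d + ηbar := by
    rw [← hd]; linarith
  obtain ⟨a, ⟨p, hpP, rfl⟩, ha⟩ := (csInf_lt_iff hbdd hne).mp hlt
  have hpP' := hPP' hpP
  have hpbdd := (key p hpP').1
  rw [hP] at hpP
  obtain ⟨hpc, hpγ, hpU⟩ := hpP
  -- pointwise bound on Φ ∘ p
  have hpt : ∀ v ∈ B, Φ (p v) ≤ d + ηbar := by
    intro v hv
    have : Φ (p v) ∈ Φ '' (p '' B) := ⟨p v, ⟨v, hv, rfl⟩, rfl⟩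
    exact le_trans (le_csSup hpbdd this) ha.le
  -- the deformed family
  set q := F ∘ p with hq
  have hqP' : q ∈ P' := by
    rw [hP']
    refine ⟨hF.comp_continuousOn hpc, ?_, ?_⟩
    · intro v hv
      simp only [hq, Function.comp_apply, hpγ v hv, hFγ v hv]
    · intro v hv
      exact (hdef (p v) (hpU v hv) (hpt v hv)).1
  have hqval : sSup (Φ '' (q '' B)) ≤ d - ηbar := by
    have hne2 : (Φ '' (q '' B)).Nonempty := ⟨Φ (q v₀), q v₀, ⟨v₀, hv₀B, rfl⟩, rfl⟩
    refine csSup_le hne2 ?_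
    rintro x ⟨y, ⟨v, hv, rfl⟩, rfl⟩
    exact (hdef (p v) (hpU v hv) (hpt v hv)).2
  calc d' ≤ sSup (Φ '' (q '' B)) := by
        rw [hd']
        exact csInf_le hbdd' ⟨q, hqP', rfl⟩
    _ ≤ d - ηbar := hqval
end
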